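/- arXiv:2410.16401 — 2 statements merged into one kernel-verified Lean document; each statement's English description precedes it below -/
import Mathlib

section
/- Let φ be infinitely differentiable with φ'(z) ≥ ρ1 and φ'''(z) ≥ ρ2 for all z ∈ ℝ, where ρ1, ρ2 > 0, and assume the coherence assumption with constant μ > 0. Let θ satisfy f_i(θ) = y_i for all i, and suppose there exist α' ∈ ℝ^n and δ ≥ 0 with ‖DG(θ) − 2 Σ_{i=1}^n α'_i Df_i(θ)‖ ≤ δ. For each i let ν_i be the unique real number with φ(ν_i) = y_i / m. Then for every i ∈ {1,…,n} and j ∈ {1,…,m}: |θ_j · x_i − ν_i| ≤ δ / (√μ · ρ1 · ρ2). -/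
open scoped RealInnerProductSpace
open Real Filter

noncomputable section

/-- The parameter space ℝ^{md}: m blocks θ_j ∈ ℝ^d, with the Euclidean norm. -/
abbrev Param (m d : ℕ) : Type := PiLp 2 (fun _ : Fin m => EuclideanSpace ℝ (Fin d))

/-- Network output f_i(θ) = Σ_j φ(θ_j · x_i). -/
def netF {n m d : ℕ} (φ : ℝ → ℝ) (x : Fin n → EuclideanSpace ℝ (Fin d)) (i : Fin n)
    (θ : Param m d) : ℝ := ∑ j, φ ⟪θ j, x i⟫

/-- Euclidean gradient Df_i(θ), with j-th block φ'(θ_j · x_i) x_i. -/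
def gradF {n m d : ℕ} (φ : ℝ → ℝ) (x : Fin n → EuclideanSpace ℝ (Fin d)) (i : Fin n)
    (θ : Param m d) : Param m d := WithLp.toLp 2 (fun j => (deriv φ ⟪θ j, x i⟫) • x i)

/-- Implicit regularizer G(θ) = Σ_i Σ_j φ'(θ_j · x_i)². -/
def regG {n m d : ℕ} (φ : ℝ → ℝ) (x : Fin n → EuclideanSpace ℝ (Fin d))
    (θ : Param m d) : ℝ := ∑ i, ∑ j, (deriv φ ⟪θ j, x i⟫) ^ 2

/-- Euclidean gradient DG(θ), with j-th block Σ_i 2 φ'(θ_j·x_i) φ''(θ_j·x_i) x_i. -/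
def gradRegG {n m d : ℕ} (φ : ℝ → ℝ) (x : Fin n → EuclideanSpace ℝ (Fin d))
    (θ : Param m d) : Param m d :=
  WithLp.toLp 2 (fun j => ∑ i, (2 * deriv φ ⟪θ j, x i⟫ * deriv (deriv φ) ⟪θ j, x i⟫) • x i)

/-- Squared loss L(θ) = Σ_i (f_i(θ) − y_i)². -/
def lossL {n m d : ℕ} (φ : ℝ → ℝ) (x : Fin n → EuclideanSpace ℝ (Fin d)) (y : Fin n → ℝ)
    (θ : Param m d) : ℝ := ∑ i, (netF φ x i θ - y i) ^ 2

/-- Jacobian Df(θ) : ℝ^{md} → ℝ^n, whose i-th row is Df_i(θ). -/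
def jacobian {n m d : ℕ} (φ : ℝ → ℝ) (x : Fin n → EuclideanSpace ℝ (Fin d))
    (θ : Param m d) : Param m d →ₗ[ℝ] (Fin n → ℝ) :=
  LinearMap.pi fun i => (innerSL ℝ (gradF φ x i θ)).toLinearMap

/-- Riemannian gradient ∇G(θ): orthogonal projection of DG(θ) onto ker Df(θ). -/
def rgradG {n m d : ℕ} (φ : ℝ → ℝ) (x : Fin n → EuclideanSpace ℝ (Fin d))
    (θ : Param m d) : Param m d :=
  (Submodule.orthogonalProjectionOnto (LinearMap.ker (jacobian φ x θ)) (gradRegG φ x θ) : Param m d)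

/-!
Write `z_{ij} = θ_j · x_i`. The `j`-th block of `DG(θ) − 2 Σ_i α_i Df_i(θ)` is
`Σ_i 2 φ'(z_{ij}) (φ''(z_{ij}) − α_i) x_i`, so coherence bounds each coefficient:
`2 ρ1 √μ |φ''(z_{ij}) − α_i| ≤ δ`. Comparing two neurons `j, k` through `α_i` gives
`|φ''(z_{ij}) − φ''(z_{ik})| ≤ δ / (√μ ρ1)`, and since `φ''' ≥ ρ2` this yields
`|z_{ij} − z_{ik}| ≤ δ / (√μ ρ1 ρ2)`. Finally `Σ_k φ(z_{ik}) = y_i = m φ(ν_i)` with `φ` strictly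
increasing puts `ν_i` between the smallest and the largest `z_{ik}`.
-/

-- `deriv f z = 0` wherever `f` is not differentiable, so a positive lower bound forces it.
lemma differentiable_of_pos_le_deriv {f : ℝ → ℝ} {ρ : ℝ} (hρ : 0 < ρ)
    (h : ∀ z, ρ ≤ deriv f z) : Differentiable ℝ f :=
  fun z => differentiableAt_of_deriv_ne_zero (hρ.trans_le (h z)).ne'

lemma mul_abs_sub_le_abs_sub_of_le_deriv {f : ℝ → ℝ} {ρ : ℝ} (hρ : 0 < ρ)
    (h : ∀ z, ρ ≤ deriv f z) (a b : ℝ) : ρ * |a - b| ≤ |f a - f b| := by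
  have hf := differentiable_of_pos_le_deriv hρ h
  rcases le_total b a with hba | hab
  · rw [abs_of_nonneg (sub_nonneg.2 hba)]
    exact (mul_sub_le_image_sub_of_le_deriv hf h hba).trans (le_abs_self _)
  · rw [abs_sub_comm, abs_sub_comm (f a), abs_of_nonneg (sub_nonneg.2 hab)]
    exact (mul_sub_le_image_sub_of_le_deriv hf h hab).trans (le_abs_self _)

lemma exists_le_and_exists_ge_of_sum_eq {ι : Type*} [Fintype ι] [Nonempty ι] {f : ℝ → ℝ}
    (hf : StrictMono f) {z : ι → ℝ} {ν : ℝ} (hsum : ∑ k, f (z k) = Fintype.card ι * f ν) :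
    (∃ k, z k ≤ ν) ∧ ∃ k, ν ≤ z k := by
  have hsum' : ∑ k, f (z k) = ∑ _k : ι, f ν := by simp [hsum]
  obtain ⟨k₁, -, hk₁⟩ := Finset.exists_le_of_sum_le Finset.univ_nonempty hsum'.le
  obtain ⟨k₀, -, hk₀⟩ := Finset.exists_le_of_sum_le Finset.univ_nonempty hsum'.ge
  exact ⟨⟨k₁, hf.le_iff_le.1 hk₁⟩, ⟨k₀, hf.le_iff_le.1 hk₀⟩⟩

lemma abs_sub_le_of_sum_eq {ι : Type*} [Fintype ι] {f : ℝ → ℝ} (hf : StrictMono f)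
    {z : ι → ℝ} {ν C : ℝ} (hsum : ∑ k, f (z k) = Fintype.card ι * f ν)
    (hz : ∀ j k, |z j - z k| ≤ C) (j : ι) : |z j - ν| ≤ C := by
  have : Nonempty ι := ⟨j⟩
  obtain ⟨⟨k₁, hk₁⟩, ⟨k₀, hk₀⟩⟩ := exists_le_and_exists_ge_of_sum_eq hf hsum
  rw [abs_sub_le_iff]
  constructor
  · linarith [(abs_sub_le_iff.1 (hz j k₁)).1]
  · linarith [(abs_sub_le_iff.1 (hz k₀ j)).1]

lemma sqrt_mul_abs_le_norm_sum_smul {ι E : Type*} [Fintype ι] [SeminormedAddCommGroup E]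
    [Module ℝ E] {v : ι → E} {μ : ℝ} (hμ : 0 ≤ μ)
    (hcoh : ∀ c : ι → ℝ, μ * ∑ i, c i ^ 2 ≤ ‖∑ i, c i • v i‖ ^ 2) (c : ι → ℝ) (i : ι) :
    √μ * |c i| ≤ ‖∑ i, c i • v i‖ := by
  have hci : c i ^ 2 ≤ ∑ k, c k ^ 2 :=
    Finset.single_le_sum (fun k _ => sq_nonneg (c k)) (Finset.mem_univ i)
  have hsq : (√μ * |c i|) ^ 2 ≤ ‖∑ i, c i • v i‖ ^ 2 := by
    rw [mul_pow, Real.sq_sqrt hμ, sq_abs]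
    exact (mul_le_mul_of_nonneg_left hci hμ).trans (hcoh c)
  exact pow_le_pow_iff_left₀ (by positivity) (norm_nonneg _) two_ne_zero |>.1 hsq

lemma gradRegG_sub_two_smul_sum_gradF_apply {n m d : ℕ} (φ : ℝ → ℝ)
    (x : Fin n → EuclideanSpace ℝ (Fin d)) (θ : Param m d) (α : Fin n → ℝ) (j : Fin m) :
    (gradRegG φ x θ - (2 : ℝ) • ∑ i, α i • gradF φ x i θ) j =
      ∑ i, (2 * deriv φ ⟪θ j, x i⟫ * (deriv (deriv φ) ⟪θ j, x i⟫ - α i)) • x i := by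
  simp only [PiLp.sub_apply, WithLp.ofLp_sum, Finset.sum_apply,
    PiLp.smul_apply, gradRegG, gradF, Finset.smul_sum, smul_smul,
    ← Finset.sum_sub_distrib, ← sub_smul]
  congr! 2
  ring

section Network

variable {n m d : ℕ} {x : Fin n → EuclideanSpace ℝ (Fin d)} {μ : ℝ} {φ : ℝ → ℝ} {θ : Param m d}
  {α : Fin n → ℝ} {δ : ℝ}

lemma sqrt_mul_two_mul_abs_deriv_deriv_sub_le (hμ : 0 ≤ μ)
    (hcoh : ∀ c : Fin n → ℝ, μ * ∑ i, c i ^ 2 ≤ ‖∑ i, c i • x i‖ ^ 2) {ρ1 : ℝ}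
    (hφ' : ∀ z, ρ1 ≤ deriv φ z)
    (happrox : ‖gradRegG φ x θ - (2 : ℝ) • ∑ i, α i • gradF φ x i θ‖ ≤ δ) (i : Fin n)
    (j : Fin m) : √μ * (2 * ρ1) * |deriv (deriv φ) ⟪θ j, x i⟫ - α i| ≤ δ := by
  set c : Fin n → ℝ := fun i => 2 * deriv φ ⟪θ j, x i⟫ * (deriv (deriv φ) ⟪θ j, x i⟫ - α i)
  have hc : 2 * ρ1 * |deriv (deriv φ) ⟪θ j, x i⟫ - α i| ≤ |c i| := by
    rw [abs_mul, abs_mul, abs_two]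
    gcongr
    exact (hφ' _).trans (le_abs_self _)
  calc √μ * (2 * ρ1) * |deriv (deriv φ) ⟪θ j, x i⟫ - α i|
      ≤ √μ * |c i| := by rw [mul_assoc]; gcongr
    _ ≤ ‖∑ i, c i • x i‖ := sqrt_mul_abs_le_norm_sum_smul hμ hcoh c i
    _ = ‖(gradRegG φ x θ - (2 : ℝ) • ∑ i, α i • gradF φ x i θ) j‖ := by
      rw [gradRegG_sub_two_smul_sum_gradF_apply]
    _ ≤ δ := (PiLp.norm_apply_le _ j).trans happrox

lemma abs_inner_sub_inner_le (hμ : 0 < μ)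
    (hcoh : ∀ c : Fin n → ℝ, μ * ∑ i, c i ^ 2 ≤ ‖∑ i, c i • x i‖ ^ 2) {ρ1 ρ2 : ℝ}
    (hρ1 : 0 < ρ1) (hρ2 : 0 < ρ2) (hφ' : ∀ z, ρ1 ≤ deriv φ z)
    (hφ''' : ∀ z, ρ2 ≤ deriv (deriv (deriv φ)) z)
    (happrox : ‖gradRegG φ x θ - (2 : ℝ) • ∑ i, α i • gradF φ x i θ‖ ≤ δ) (i : Fin n)
    (j k : Fin m) : |⟪θ j, x i⟫ - ⟪θ k, x i⟫| ≤ δ / (√μ * ρ1 * ρ2) := by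
  have hj := sqrt_mul_two_mul_abs_deriv_deriv_sub_le hμ.le hcoh hφ' happrox i j
  have hk := sqrt_mul_two_mul_abs_deriv_deriv_sub_le hμ.le hcoh hφ' happrox i k
  have hψ := mul_abs_sub_le_abs_sub_of_le_deriv hρ2 hφ''' ⟪θ j, x i⟫ ⟪θ k, x i⟫
  have htri := abs_sub_le (deriv (deriv φ) ⟪θ j, x i⟫) (α i) (deriv (deriv φ) ⟪θ k, x i⟫)
  rw [abs_sub_comm (α i)] at htri
  rw [le_div_iff₀ (by positivity)]
  have hsμρ : 0 ≤ √μ * ρ1 := by positivity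
  calc |⟪θ j, x i⟫ - ⟪θ k, x i⟫| * (√μ * ρ1 * ρ2)
      = √μ * ρ1 * (ρ2 * |⟪θ j, x i⟫ - ⟪θ k, x i⟫|) := by ring
    _ ≤ √μ * ρ1 * (|deriv (deriv φ) ⟪θ j, x i⟫ - α i| + |deriv (deriv φ) ⟪θ k, x i⟫ - α i|) := by
      gcongr; exact hψ.trans htri
    _ ≤ δ := by linarith

end Network

theorem stmt_8_general
    (n m d : ℕ)
    (x : Fin n → EuclideanSpace ℝ (Fin d))
    (μ : ℝ) (hμ : 0 < μ)
    (hcoh : ∀ c : Fin n → ℝ, μ * ∑ i, (c i) ^ 2 ≤ ‖∑ i, c i • x i‖ ^ 2)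
    (y : Fin n → ℝ)
    (φ : ℝ → ℝ)
    (ρ1 ρ2 : ℝ) (hρ1 : 0 < ρ1) (hρ2 : 0 < ρ2)
    (hφ' : ∀ z, ρ1 ≤ deriv φ z)
    (hφ''' : ∀ z, ρ2 ≤ deriv (deriv (deriv φ)) z)
    (θ : Param m d)
    (hfit : ∀ i, netF φ x i θ = y i)
    (α : Fin n → ℝ) (δ : ℝ)
    (happrox : ‖gradRegG φ x θ - (2 : ℝ) • ∑ i, α i • gradF φ x i θ‖ ≤ δ)
    (ν : Fin n → ℝ) (hν : ∀ i, φ (ν i) = y i / (m : ℝ)) :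
    ∀ i j, |⟪θ j, x i⟫ - ν i| ≤ δ / (Real.sqrt μ * ρ1 * ρ2) := by
  intro i j
  have hm : (m : ℝ) ≠ 0 := by exact_mod_cast j.pos.ne'
  have hφ_mono : StrictMono φ := strictMono_of_deriv_pos fun z => hρ1.trans_le (hφ' z)
  have hsum : ∑ k, φ ⟪θ k, x i⟫ = Fintype.card (Fin m) * φ (ν i) := by
    rw [Fintype.card_fin, hν i, mul_div_cancel₀ _ hm]
    exact hfit i
  exact abs_sub_le_of_sum_eq hφ_mono hsum
    (abs_inner_sub_inner_le hμ hcoh hρ1 hρ2 hφ' hφ''' happrox i) j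

/-- small (approximate-stationarity) gradient implies every pre-activation
θ_j·x_i is within δ/(√μ·ρ1·ρ2) of ν_i = φ⁻¹(y_i/m). -/
theorem stmt_8
    (n m d : ℕ) (hn : 1 ≤ n) (hm : 1 ≤ m) (hd : 1 ≤ d)
    (x : Fin n → EuclideanSpace ℝ (Fin d)) (hx : ∀ i, ‖x i‖ = 1)
    (μ : ℝ) (hμ : 0 < μ)
    (hcoh : ∀ c : Fin n → ℝ, μ * ∑ i, (c i) ^ 2 ≤ ‖∑ i, c i • x i‖ ^ 2)
    (y : Fin n → ℝ)
    (φ : ℝ → ℝ) (hφ : ContDiff ℝ (⊤ : ℕ∞) φ)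
    (ρ1 ρ2 : ℝ) (hρ1 : 0 < ρ1) (hρ2 : 0 < ρ2)
    (hφ' : ∀ z, ρ1 ≤ deriv φ z)
    (hφ''' : ∀ z, ρ2 ≤ deriv (deriv (deriv φ)) z)
    (θ : Param m d)
    (hfit : ∀ i, netF φ x i θ = y i)
    (α : Fin n → ℝ) (δ : ℝ) (hδ : 0 ≤ δ)
    (happrox : ‖gradRegG φ x θ - (2 : ℝ) • ∑ i, α i • gradF φ x i θ‖ ≤ δ)
    (ν : Fin n → ℝ) (hν : ∀ i, φ (ν i) = y i / (m : ℝ)) :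
    ∀ i j, |⟪θ j, x i⟫ - ν i| ≤ δ / (Real.sqrt μ * ρ1 * ρ2) :=
  stmt_8_general n m d x μ hμ hcoh y φ ρ1 ρ2 hρ1 hρ2 hφ' hφ''' θ hfit α δ happrox ν hν
end
end

section
/- Let φ be infinitely differentiable with φ'(z) ≥ ρ1 and φ'''(z) ≥ ρ2 for all z ∈ ℝ, where ρ1, ρ2 > 0, satisfying β-normality with constant β > 0, and assume the coherence assumption with constant μ > 0. Let θ : [0, ∞) → ℝ^{md} be a Riemannian gradient-flow trajectory of G on the zero-loss set. Then for every ε > 0 and every time t ≥ G(θ(0)) / (μ β²) + log(max(μ β² / ε², 1)) / (ρ1 ρ2 μ), the flow is ε-stationary: ‖∇G(θ(t))‖ ≤ ε. -/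
/-!
Along the flow `G` decreases at rate `N = ‖∇G‖²`, so `N ≤ μβ²` at some time
`T ≤ G(θ(0)) / (μβ²)`. Write `∇G = DG - Σ λᵢ Dfᵢ`, with `λ` obtained from the Gram matrix of the
rows `Dfᵢ`; block `j` of `∇G` is then `Σ cᵢⱼ xᵢ` with `cᵢⱼ = φ'(2φ'' - λᵢ)`. Since
`∇G ∈ ker Df`, the derivative of `λ` drops out of `N' = -2 Σ hᵢⱼ ⟨xᵢ, (∇G)ⱼ⟩²`, where
`hᵢⱼ = φ''(2φ'' - λᵢ) + 2φ'φ'''`.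
While `N ≤ μβ²`, coherence gives `|cᵢⱼ| ≤ β`, β-normality turns this into `hᵢⱼ ≥ φ'φ''' ≥ ρ₁ρ₂`,
and coherence again gives `Σᵢ ⟨xᵢ, v⟩² ≥ μ‖v‖²` on the span of the `xᵢ`. Hence
`N' ≤ -2ρ₁ρ₂μ N` there, so `N` stays below `μβ²` and decays exponentially after `T`.
-/

open scoped RealInnerProductSpace
open Real Filter

noncomputable section

open Matrix Set

section Coherence

variable {ι E : Type*} [Fintype ι] [NormedAddCommGroup E] [InnerProductSpace ℝ E]

def Coherent (μ : ℝ) (v : ι → E) : Prop :=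
  ∀ c : ι → ℝ, μ * ∑ i, c i ^ 2 ≤ ‖∑ i, c i • v i‖ ^ 2

variable {μ : ℝ} {v : ι → E}

theorem Coherent.mul_sq_le (h : Coherent μ v) (hμ : 0 ≤ μ) (c : ι → ℝ) (i : ι) :
    μ * c i ^ 2 ≤ ‖∑ i, c i • v i‖ ^ 2 :=
  (h c).trans' <| mul_le_mul_of_nonneg_left
    (Finset.single_le_sum (fun k _ => sq_nonneg (c k)) (Finset.mem_univ i)) hμ

theorem Coherent.linearIndependent (h : Coherent μ v) (hμ : 0 < μ) : LinearIndependent ℝ v := by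
  rw [Fintype.linearIndependent_iff]
  intro c hc i
  have := h.mul_sq_le hμ.le c i
  rw [hc, norm_zero, zero_pow two_ne_zero] at this
  by_contra hci
  exact this.not_gt (by positivity)

theorem Coherent.mul_norm_sq_le_sum_inner_sq (h : Coherent μ v) (hμ : 0 ≤ μ) (c : ι → ℝ) :
    μ * ‖∑ i, c i • v i‖ ^ 2 ≤ ∑ i, ⟪v i, ∑ k, c k • v k⟫ ^ 2 := by
  have hw : ‖∑ k, c k • v k‖ ^ 2 = ∑ i, c i * ⟪v i, ∑ k, c k • v k⟫ := by
    rw [← real_inner_self_eq_norm_sq, sum_inner]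
    simp only [real_inner_smul_left]
  set w := ∑ k, c k • v k
  have hCS := Finset.sum_mul_sq_le_sq_mul_sq Finset.univ c fun i => ⟪v i, w⟫
  rw [← hw] at hCS
  have hU : 0 ≤ ∑ i, ⟪v i, w⟫ ^ 2 := Finset.sum_nonneg fun i _ => sq_nonneg _
  rcases (sq_nonneg ‖w‖).eq_or_lt with hw0 | hwpos
  · rw [← hw0, mul_zero]; exact hU
  · nlinarith [h c]

end Coherence

section GramProjection

variable {ι E : Type*} [Fintype ι] [DecidableEq ι] [NormedAddCommGroup E] [InnerProductSpace ℝ E]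
  {g : ι → E}

def gramMultiplier (g : ι → E) (w : E) : ι → ℝ :=
  (gram ℝ g)⁻¹ *ᵥ fun i => ⟪g i, w⟫

theorem inner_sum_gramMultiplier_smul (hg : LinearIndependent ℝ g) (w : E) (k : ι) :
    ⟪g k, ∑ i, gramMultiplier g w i • g i⟫ = ⟪g k, w⟫ := by
  have hdet : IsUnit (gram ℝ g).det :=
    (det_gram_ne_zero_iff_linearIndependent.2 hg).isUnit
  have := congrFun (congrArg (· *ᵥ fun i => ⟪g i, w⟫) (mul_nonsing_inv _ hdet)) k
  simp only [← mulVec_mulVec, one_mulVec] at this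
  rw [← this, gramMultiplier]
  simp only [inner_sum, real_inner_smul_right, mulVec, dotProduct, gram_apply]
  exact Finset.sum_congr rfl fun i _ => mul_comm _ _

theorem starProjection_eq_sub_sum_gramMultiplier (K : Submodule ℝ E) [K.HasOrthogonalProjection]
    (hK : ∀ u, u ∈ K ↔ ∀ i, ⟪g i, u⟫ = 0) (hg : LinearIndependent ℝ g) (w : E) :
    K.starProjection w = w - ∑ i, gramMultiplier g w i • g i := by
  refine K.eq_starProjection_of_mem_of_inner_eq_zero ?_ fun u hu => ?_
  · exact (hK _).2 fun k => by rw [inner_sub_right, inner_sum_gramMultiplier_smul hg, sub_self]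
  · rw [sub_sub_cancel, sum_inner]
    exact Finset.sum_eq_zero fun i _ => by rw [real_inner_smul_left, (hK u).1 hu i, mul_zero]

end GramProjection

theorem inv_mulVec_apply_eq_det_updateCol {K ι : Type*} [Field K] [Fintype ι] [DecidableEq ι]
    (M : Matrix ι ι K) (v : ι → K) (i : ι) :
    (M⁻¹ *ᵥ v) i = M.det⁻¹ * (M.updateCol i v).det := by
  rw [inv_def, Ring.inverse_eq_inv', smul_mulVec, ← cramer_eq_adjugate_mulVec, Pi.smul_apply,
    cramer_apply, smul_eq_mul]

section MatrixCalculus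

variable {𝕜 ι : Type*} [NontriviallyNormedField 𝕜] [Fintype ι] [DecidableEq ι]
  {A : 𝕜 → Matrix ι ι 𝕜} {b : 𝕜 → ι → 𝕜} {t : 𝕜}

theorem DifferentiableAt.matrix_det (hA : ∀ i j, DifferentiableAt 𝕜 (fun s => A s i j) t) :
    DifferentiableAt 𝕜 (fun s => (A s).det) t := by
  simp only [det_apply']
  exact .fun_sum fun σ _ => (DifferentiableAt.fun_finsetProd fun i _ => hA _ _).const_mul _

theorem DifferentiableAt.matrix_inv_mulVec (hA : ∀ i j, DifferentiableAt 𝕜 (fun s => A s i j) t)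
    (hb : ∀ i, DifferentiableAt 𝕜 (fun s => b s i) t) (hdet : (A t).det ≠ 0) (i : ι) :
    DifferentiableAt 𝕜 (fun s => ((A s)⁻¹ *ᵥ b s) i) t := by
  simp only [inv_mulVec_apply_eq_det_updateCol]
  refine ((DifferentiableAt.matrix_det hA).inv hdet).mul (DifferentiableAt.matrix_det fun k j => ?_)
  simp only [updateCol_apply]
  split_ifs
  exacts [hb k, hA k j]

end MatrixCalculus

section Dissipation

variable {G N N' : ℝ → ℝ} {c M : ℝ}

theorem exists_mem_Icc_le_of_hasDerivAt_eq_neg (hM : 0 < M)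
    (hG : ∀ t, 0 ≤ t → 0 < G t) (hG' : ∀ t, 0 ≤ t → HasDerivAt G (-N t) t) :
    ∃ T ∈ Icc 0 (G 0 / M), N T ≤ M := by
  have hT : 0 < G 0 / M := div_pos (hG 0 le_rfl) hM
  obtain ⟨T, ⟨hT0, hT1⟩, hslope⟩ := exists_hasDerivAt_eq_slope G (fun t => -N t) hT
    (fun t ht => (hG' t ht.1).continuousAt.continuousWithinAt)
    (fun t ht => hG' t ht.1.le)
  refine ⟨T, ⟨hT0.le, hT1.le⟩, ?_⟩
  have hGT := hG _ hT.le
  rw [sub_zero, eq_div_iff hT.ne'] at hslope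
  have : N T * (G 0 / M) < M * (G 0 / M) := by
    rw [mul_div_cancel₀ _ hM.ne']; linarith
  exact (lt_of_mul_lt_mul_right this hT.le).le

theorem le_mul_exp_of_hasDerivAt_le {a : ℝ} (hc : 0 < c) (hM : 0 < M)
    (hN : ∀ t, a ≤ t → HasDerivAt N (N' t) t) (hN' : ∀ t, a ≤ t → N t ≤ M → N' t ≤ -(2 * c) * N t)
    (ha : N a ≤ M) {t : ℝ} (ht : a ≤ t) : N t ≤ M * exp (-c * (t - a)) := by
  have hB : ∀ s, HasDerivAt (fun s => M * exp (-c * (s - a))) (-c * (M * exp (-c * (s - a)))) s :=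
    fun s =>
      ((((hasDerivAt_id' s).sub_const a).const_mul (-c)).exp.const_mul M).congr_deriv (by ring)
  refine image_le_of_deriv_right_lt_deriv_boundary
    (fun s hs => (hN s hs.1).continuousAt.continuousWithinAt)
    (fun s hs => (hN s hs.1).hasDerivWithinAt) (by simpa using ha) hB ?_ ⟨ht, le_rfl⟩
  intro s hs hNs
  have hpos : 0 < M * exp (-c * (s - a)) := by positivity
  have hle : N s ≤ M := hNs ▸ mul_le_of_le_one_right hM.le (exp_le_one_iff.2 (by nlinarith [hs.1]))
  have := hN' s hs.1 hle
  rw [hNs] at this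
  nlinarith

theorem le_of_hasDerivAt_dissipation {ε : ℝ} (hc : 0 < c) (hM : 0 < M) (hε : 0 < ε)
    (hG : ∀ t, 0 ≤ t → 0 < G t) (hG' : ∀ t, 0 ≤ t → HasDerivAt G (-N t) t)
    (hN : ∀ t, 0 ≤ t → HasDerivAt N (N' t) t)
    (hN' : ∀ t, 0 ≤ t → N t ≤ M → N' t ≤ -(2 * c) * N t)
    {t : ℝ} (ht : G 0 / M + log (max (M / ε) 1) / c ≤ t) : N t ≤ ε := by
  obtain ⟨T, hT, hNT⟩ := exists_mem_Icc_le_of_hasDerivAt_eq_neg hM hG hG'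
  have hmax : 0 < max (M / ε) 1 := lt_max_of_lt_right one_pos
  have hL : 0 ≤ log (max (M / ε) 1) := log_nonneg (le_max_right _ _)
  have hLt : log (max (M / ε) 1) ≤ c * (t - T) := by
    rw [← div_le_iff₀' hc]; linarith [hT.2]
  calc N t ≤ M * exp (-c * (t - T)) :=
        le_mul_exp_of_hasDerivAt_le hc hM (fun s hs => hN s (hT.1.trans hs))
          (fun s hs => hN' s (hT.1.trans hs)) hNT (by linarith [div_nonneg hL hc.le, hT.2])
    _ ≤ M * exp (-log (max (M / ε) 1)) := by gcongr; linarith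
    _ = M / max (M / ε) 1 := by rw [exp_neg, exp_log hmax, ← div_eq_mul_inv]
    _ ≤ ε := by
      rw [div_le_iff₀ hmax, ← div_le_iff₀' hε]
      exact le_max_left _ _

end Dissipation

namespace ShallowNet

variable {n m d : ℕ} (φ : ℝ → ℝ) (x : Fin n → EuclideanSpace ℝ (Fin d))

def phi1 (θ : Param m d) (i : Fin n) (j : Fin m) : ℝ := deriv φ ⟪θ j, x i⟫

def phi2 (θ : Param m d) (i : Fin n) (j : Fin m) : ℝ := deriv (deriv φ) ⟪θ j, x i⟫

def phi3 (θ : Param m d) (i : Fin n) (j : Fin m) : ℝ := deriv (deriv (deriv φ)) ⟪θ j, x i⟫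

def multiplier (θ : Param m d) : Fin n → ℝ :=
  gramMultiplier (fun i => gradF φ x i θ) (gradRegG φ x θ)

def coeff (θ : Param m d) (i : Fin n) (j : Fin m) : ℝ :=
  phi1 φ x θ i j * (2 * phi2 φ x θ i j - multiplier φ x θ i)

def hessCoeff (θ : Param m d) (i : Fin n) (j : Fin m) : ℝ :=
  phi2 φ x θ i j * (2 * phi2 φ x θ i j - multiplier φ x θ i) + 2 * phi1 φ x θ i j * phi3 φ x θ i j

def dissipation (θ : Param m d) : ℝ :=
  ∑ j, ∑ i, hessCoeff φ x θ i j * ⟪x i, rgradG φ x θ j⟫ ^ 2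

variable {φ x} {θ : Param m d}

theorem gradF_apply (i : Fin n) (j : Fin m) : gradF φ x i θ j = phi1 φ x θ i j • x i := rfl

theorem gradRegG_apply (j : Fin m) :
    gradRegG φ x θ j = ∑ i, (2 * phi1 φ x θ i j * phi2 φ x θ i j) • x i := rfl

theorem inner_gradF (i : Fin n) (w : Param m d) :
    ⟪gradF φ x i θ, w⟫ = ∑ j, phi1 φ x θ i j * ⟪x i, w j⟫ := by
  rw [PiLp.inner_apply]
  simp only [gradF_apply, real_inner_smul_left]

theorem mem_ker_jacobian_iff {w : Param m d} :
    w ∈ LinearMap.ker (jacobian φ x θ) ↔ ∀ i, ⟪gradF φ x i θ, w⟫ = 0 := by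
  simp [jacobian, funext_iff]

theorem linearIndependent_gradF [Nonempty (Fin m)] (hx : LinearIndependent ℝ x)
    (hφ : ∀ z, deriv φ z ≠ 0) : LinearIndependent ℝ fun i => gradF φ x i θ := by
  obtain ⟨j⟩ := ‹Nonempty (Fin m)›
  rw [Fintype.linearIndependent_iff] at hx ⊢
  intro c hc i
  have hblock : ∑ i, (c i * phi1 φ x θ i j) • x i = 0 := by
    simpa [gradF_apply, smul_smul] using congrArg (fun v : Param m d => v j) hc
  exact (mul_eq_zero.1 (hx _ hblock i)).resolve_right (hφ _)

theorem regG_pos [Nonempty (Fin n)] [Nonempty (Fin m)] (hφ : ∀ z, 0 < deriv φ z) :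
    0 < regG φ x θ :=
  Finset.sum_pos (fun _ _ => Finset.sum_pos (fun _ _ => pow_pos (hφ _) 2) Finset.univ_nonempty)
    Finset.univ_nonempty

theorem rgradG_eq (hli : LinearIndependent ℝ fun i => gradF φ x i θ) :
    rgradG φ x θ = gradRegG φ x θ - ∑ i, multiplier φ x θ i • gradF φ x i θ :=
  starProjection_eq_sub_sum_gramMultiplier _ (fun _ => mem_ker_jacobian_iff) hli _

theorem rgradG_apply (hli : LinearIndependent ℝ fun i => gradF φ x i θ) (j : Fin m) :
    rgradG φ x θ j = ∑ i, coeff φ x θ i j • x i := by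
  simp only [rgradG_eq hli, PiLp.sub_apply, gradRegG_apply, WithLp.ofLp_sum, WithLp.ofLp_smul,
    Finset.sum_apply, Pi.smul_apply, gradF_apply, smul_smul, ← Finset.sum_sub_distrib, ← sub_smul]
  exact Finset.sum_congr rfl fun i _ => by rw [coeff]; congr 1; ring

theorem inner_gradRegG_rgradG : ⟪gradRegG φ x θ, rgradG φ x θ⟫ = ‖rgradG φ x θ‖ ^ 2 := by
  rw [rgradG, real_inner_comm, ← Submodule.inner_orthogonalProjectionOnto_eq_of_mem_left,
    real_inner_self_eq_norm_sq, Submodule.coe_norm]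

theorem sum_phi1_mul_inner_rgradG (i : Fin n) :
    ∑ j, phi1 φ x θ i j * ⟪x i, rgradG φ x θ j⟫ = 0 := by
  rw [← inner_gradF]
  exact mem_ker_jacobian_iff.1 (Submodule.coe_mem _) i

section Trajectory

-- Without this shortcut, instance search for it times out.
local instance : ContinuousSMul ℝ (Param m d) := IsBoundedSMul.continuousSMul

variable {θt : ℝ → Param m d} {w : Param m d} {t : ℝ}

theorem hasDerivAt_inner_apply (hθ : HasDerivAt θt w t) (i : Fin n) (j : Fin m) :
    HasDerivAt (fun s => (⟪θt s j, x i⟫ : ℝ)) (⟪w j, x i⟫ : ℝ) t := by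
  have hj : HasDerivAt (fun s => θt s j) (w j) t :=
    (PiLp.proj 2 (fun _ : Fin m => EuclideanSpace ℝ (Fin d)) j).hasFDerivAt.comp_hasDerivAt t hθ
  simpa using hj.inner ℝ (hasDerivAt_const t (x i))

theorem hasDerivAt_comp_inner_apply {ψ : ℝ → ℝ} (hψ : Differentiable ℝ ψ)
    (hθ : HasDerivAt θt w t) (i : Fin n) (j : Fin m) :
    HasDerivAt (fun s => ψ ⟪θt s j, x i⟫) (deriv ψ ⟪θt t j, x i⟫ * (⟪w j, x i⟫ : ℝ)) t :=
  (hψ _).hasDerivAt.comp t (hasDerivAt_inner_apply hθ i j)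

theorem hasDerivAt_regG (hd1 : Differentiable ℝ (deriv φ)) (hθ : HasDerivAt θt w t) :
    HasDerivAt (fun s => regG φ x (θt s)) (⟪gradRegG φ x (θt t), w⟫ : ℝ) t := by
  unfold regG
  refine (HasDerivAt.fun_sum fun i _ => HasDerivAt.fun_sum fun j _ =>
    (hasDerivAt_comp_inner_apply hd1 hθ i j).pow 2).congr_deriv ?_
  rw [PiLp.inner_apply, Finset.sum_comm]
  simp only [gradRegG_apply, sum_inner, real_inner_smul_left]
  refine Finset.sum_congr rfl fun j _ => Finset.sum_congr rfl fun i _ => ?_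
  rw [phi1, phi2, real_inner_comm (x i) (w j)]
  ring

theorem hasDerivAt_regG_of_flow (hd1 : Differentiable ℝ (deriv φ))
    (hθ : HasDerivAt θt (-rgradG φ x (θt t)) t) :
    HasDerivAt (fun s => regG φ x (θt s)) (-‖rgradG φ x (θt t)‖ ^ 2) t :=
  (hasDerivAt_regG hd1 hθ).congr_deriv (by rw [inner_neg_right, inner_gradRegG_rgradG])

theorem differentiableAt_multiplier (hd1 : Differentiable ℝ (deriv φ))
    (hd2 : Differentiable ℝ (deriv (deriv φ))) (hθ : HasDerivAt θt w t)
    (hli : LinearIndependent ℝ fun i => gradF φ x i (θt t)) (i : Fin n) :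
    DifferentiableAt ℝ (fun s => multiplier φ x (θt s) i) t := by
  have hF : ∀ i, DifferentiableAt ℝ (fun s => gradF φ x i (θt s)) t := fun i =>
    (differentiableAt_piLp 2).2 fun j =>
      (hasDerivAt_comp_inner_apply hd1 hθ i j).differentiableAt.smul_const (x i)
  have hR : DifferentiableAt ℝ (fun s => gradRegG φ x (θt s)) t :=
    (differentiableAt_piLp 2).2 fun j => by
      simp only [gradRegG_apply]
      exact DifferentiableAt.fun_sum fun i _ =>
        (((hasDerivAt_comp_inner_apply hd1 hθ i j).differentiableAt.const_mul 2).mul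
          (hasDerivAt_comp_inner_apply hd2 hθ i j).differentiableAt).smul_const (x i)
  exact DifferentiableAt.matrix_inv_mulVec (fun i k => (hF i).inner ℝ (hF k))
    (fun i => (hF i).inner ℝ hR) (det_gram_ne_zero_iff_linearIndependent.2 hli) i

theorem hasDerivAt_coeff (hd1 : Differentiable ℝ (deriv φ))
    (hd2 : Differentiable ℝ (deriv (deriv φ))) (hθ : HasDerivAt θt (-rgradG φ x (θt t)) t)
    {i : Fin n} {l' : ℝ} (hl : HasDerivAt (fun s => multiplier φ x (θt s) i) l' t) (j : Fin m) :
    HasDerivAt (fun s => coeff φ x (θt s) i j)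
      (-(hessCoeff φ x (θt t) i j * ⟪x i, rgradG φ x (θt t) j⟫) - phi1 φ x (θt t) i j * l') t := by
  have h1 := hasDerivAt_comp_inner_apply (x := x) hd1 hθ i j
  have h2 := hasDerivAt_comp_inner_apply (x := x) hd2 hθ i j
  refine (h1.mul ((h2.const_mul 2).sub hl)).congr_deriv ?_
  simp only [PiLp.neg_apply, Pi.sub_apply, real_inner_comm (x i), inner_neg_right, hessCoeff, phi1,
    phi2, phi3]
  ring

theorem hasDerivAt_norm_sq_rgradG (hd1 : Differentiable ℝ (deriv φ))
    (hd2 : Differentiable ℝ (deriv (deriv φ)))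
    (hli : ∀ s, LinearIndependent ℝ fun i => gradF φ x i (θt s))
    (hθ : HasDerivAt θt (-rgradG φ x (θt t)) t) :
    HasDerivAt (fun s => ‖rgradG φ x (θt s)‖ ^ 2) (-2 * dissipation φ x (θt t)) t := by
  have hc := fun i => hasDerivAt_coeff hd1 hd2 hθ
    (differentiableAt_multiplier hd1 hd2 hθ (hli t) i).hasDerivAt
  have hN : (fun s => ‖rgradG φ x (θt s)‖ ^ 2) =
      fun s => ∑ j, ‖∑ i, coeff φ x (θt s) i j • x i‖ ^ 2 := by
    ext s
    simp only [PiLp.norm_sq_eq_of_L2, rgradG_apply (hli s)]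
  rw [hN]
  refine (HasDerivAt.fun_sum fun j _ =>
    (HasDerivAt.fun_sum fun i _ => (hc i j).smul_const (x i)).norm_sq).congr_deriv ?_
  have hker := sum_phi1_mul_inner_rgradG (φ := φ) (x := x) (θ := θt t)
  simp only [← rgradG_apply (hli t), inner_sum, real_inner_smul_right, dissipation,
    real_inner_comm (x _)]
  set u := fun i j => ⟪x i, rgradG φ x (θt t) j⟫
  set l' := fun i => deriv (fun s => multiplier φ x (θt s) i) t
  have hsplit : ∀ j,
      2 * ∑ i, (-(hessCoeff φ x (θt t) i j * u i j) - phi1 φ x (θt t) i j * l' i) * u i j =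
        ∑ i, -2 * (hessCoeff φ x (θt t) i j * u i j ^ 2) -
          ∑ i, 2 * l' i * (phi1 φ x (θt t) i j * u i j) := fun j => by
    rw [Finset.mul_sum, ← Finset.sum_sub_distrib]
    exact Finset.sum_congr rfl fun i _ => by ring
  -- the derivative of the multipliers drops out because `∇G ∈ ker Df`
  have hzero : ∑ j, ∑ i, 2 * l' i * (phi1 φ x (θt t) i j * u i j) = 0 := by
    rw [Finset.sum_comm]
    exact Finset.sum_eq_zero fun i _ => by rw [← Finset.mul_sum, hker i, mul_zero]
  rw [Finset.sum_congr rfl fun j _ => hsplit j, Finset.sum_sub_distrib, hzero, sub_zero]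
  simp only [Finset.mul_sum, u]

end Trajectory

section Bounds

variable {μ β ρ1 ρ2 : ℝ}

theorem abs_coeff_le (hcoh : Coherent μ x) (hμ : 0 < μ) (hβ : 0 ≤ β)
    (hli : LinearIndependent ℝ fun i => gradF φ x i θ) (hN : ‖rgradG φ x θ‖ ^ 2 ≤ μ * β ^ 2)
    (i : Fin n) (j : Fin m) : |coeff φ x θ i j| ≤ β := by
  refine abs_le_of_sq_le_sq (le_of_mul_le_mul_left ?_ hμ) hβ
  calc μ * coeff φ x θ i j ^ 2 ≤ ‖rgradG φ x θ j‖ ^ 2 := by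
        rw [rgradG_apply hli]; exact hcoh.mul_sq_le hμ.le (fun i => coeff φ x θ i j) i
    _ ≤ ‖rgradG φ x θ‖ ^ 2 := by gcongr; exact PiLp.norm_apply_le _ j
    _ ≤ μ * β ^ 2 := hN

theorem le_hessCoeff (hρ1 : 0 < ρ1) (hρ2 : 0 ≤ ρ2) (hβ : 0 < β) (hφ' : ∀ z, ρ1 ≤ deriv φ z)
    (hφ''' : ∀ z, ρ2 ≤ deriv (deriv (deriv φ)) z)
    (hnormal : ∀ z, β * |deriv (deriv φ) z| ≤ (deriv φ z) ^ 2 * deriv (deriv (deriv φ)) z)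
    {i : Fin n} {j : Fin m} (hc : |coeff φ x θ i j| ≤ β) : ρ1 * ρ2 ≤ hessCoeff φ x θ i j := by
  rw [coeff] at hc
  rw [hessCoeff]
  set a := phi1 φ x θ i j
  set b := phi2 φ x θ i j
  set e := phi3 φ x θ i j
  set r := 2 * b - multiplier φ x θ i
  have ha : 0 < a := hρ1.trans_le (hφ' _)
  have he : 0 ≤ e := hρ2.trans (hφ''' _)
  rw [abs_mul, abs_of_pos ha] at hc
  have hbr : β * |b * r| ≤ β * (a * e) :=
    calc β * |b * r| = β * |b| * |r| := by rw [abs_mul, mul_assoc]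
      _ ≤ a ^ 2 * e * |r| := mul_le_mul_of_nonneg_right (hnormal _) (abs_nonneg r)
      _ = a * e * (a * |r|) := by ring
      _ ≤ a * e * β := mul_le_mul_of_nonneg_left hc (by positivity)
      _ = β * (a * e) := mul_comm _ _
  have hae : ρ1 * ρ2 ≤ a * e := mul_le_mul (hφ' _) (hφ''' _) hρ2 ha.le
  linarith [neg_abs_le (b * r), le_of_mul_le_mul_left hbr hβ]

theorem mul_norm_sq_le_dissipation (hcoh : Coherent μ x) (hμ : 0 < μ) (hρ1 : 0 < ρ1)
    (hρ2 : 0 ≤ ρ2) (hβ : 0 < β) (hφ' : ∀ z, ρ1 ≤ deriv φ z)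
    (hφ''' : ∀ z, ρ2 ≤ deriv (deriv (deriv φ)) z)
    (hnormal : ∀ z, β * |deriv (deriv φ) z| ≤ (deriv φ z) ^ 2 * deriv (deriv (deriv φ)) z)
    (hli : LinearIndependent ℝ fun i => gradF φ x i θ) (hN : ‖rgradG φ x θ‖ ^ 2 ≤ μ * β ^ 2) :
    ρ1 * ρ2 * μ * ‖rgradG φ x θ‖ ^ 2 ≤ dissipation φ x θ := by
  have hhess : ∀ i j, ρ1 * ρ2 ≤ hessCoeff φ x θ i j := fun i j =>
    le_hessCoeff hρ1 hρ2 hβ hφ' hφ''' hnormal (abs_coeff_le hcoh hμ hβ.le hli hN i j)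
  calc ρ1 * ρ2 * μ * ‖rgradG φ x θ‖ ^ 2 = ρ1 * ρ2 * ∑ j, μ * ‖rgradG φ x θ j‖ ^ 2 := by
        rw [PiLp.norm_sq_eq_of_L2, Finset.mul_sum, Finset.mul_sum]
        simp only [mul_assoc]
    _ ≤ ρ1 * ρ2 * ∑ j, ∑ i, ⟪x i, rgradG φ x θ j⟫ ^ 2 := by
        gcongr with j
        rw [rgradG_apply hli]
        exact hcoh.mul_norm_sq_le_sum_inner_sq hμ.le _
    _ ≤ dissipation φ x θ := by
        rw [dissipation, Finset.mul_sum]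
        gcongr with j
        rw [Finset.mul_sum]
        gcongr with i
        exact hhess i j

end Bounds

end ShallowNet

set_option synthInstance.maxHeartbeats 1000000 in
set_option maxHeartbeats 4000000 in
open ShallowNet in
theorem stmt_15_general
    (n m d : ℕ) (hn : 1 ≤ n) (hm : 1 ≤ m)
    (x : Fin n → EuclideanSpace ℝ (Fin d))
    (μ : ℝ) (hμ : 0 < μ)
    (hcoh : ∀ c : Fin n → ℝ, μ * ∑ i, (c i) ^ 2 ≤ ‖∑ i, c i • x i‖ ^ 2)
    (φ : ℝ → ℝ) (hφ : ContDiff ℝ (⊤ : ℕ∞) φ)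
    (ρ1 ρ2 : ℝ) (hρ1 : 0 < ρ1) (hρ2 : 0 < ρ2)
    (hφ' : ∀ z, ρ1 ≤ deriv φ z)
    (hφ''' : ∀ z, ρ2 ≤ deriv (deriv (deriv φ)) z)
    (β : ℝ) (hβ : 0 < β)
    (hnormal : ∀ z, β * |deriv (deriv φ) z| ≤ (deriv φ z) ^ 2 * deriv (deriv (deriv φ)) z)
    (θt : ℝ → Param m d)
    (hflow : ∀ t, 0 ≤ t → HasDerivAt θt (-(rgradG φ x (θt t))) t) :
    ∀ ε : ℝ, 0 < ε → ∀ t : ℝ,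
      regG φ x (θt 0) / (μ * β ^ 2)
          + Real.log (max (μ * β ^ 2 / ε ^ 2) 1) / (ρ1 * ρ2 * μ) ≤ t →
      ‖rgradG φ x (θt t)‖ ≤ ε := by
  intro ε hε t ht
  have : Nonempty (Fin n) := ⟨⟨0, hn⟩⟩
  have : Nonempty (Fin m) := ⟨⟨0, hm⟩⟩
  have hpos : ∀ z, 0 < deriv φ z := fun z => hρ1.trans_le (hφ' z)
  obtain ⟨-, hφd⟩ := contDiff_infty_iff_deriv.1 hφ
  obtain ⟨hd1, hφdd⟩ := contDiff_infty_iff_deriv.1 hφd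
  have hd2 := (contDiff_infty_iff_deriv.1 hφdd).1
  have hli : ∀ θ : Param m d, LinearIndependent ℝ fun i => gradF φ x i θ := fun θ =>
    linearIndependent_gradF (Coherent.linearIndependent hcoh hμ) fun z => (hpos z).ne'
  have hN : ‖rgradG φ x (θt t)‖ ^ 2 ≤ ε ^ 2 :=
    le_of_hasDerivAt_dissipation (N' := fun s => -2 * dissipation φ x (θt s))
      (mul_pos (mul_pos hρ1 hρ2) hμ) (by positivity) (by positivity) (fun s _ => regG_pos hpos)
      (fun s hs => hasDerivAt_regG_of_flow hd1 (hflow s hs))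
      (fun s hs => hasDerivAt_norm_sq_rgradG hd1 hd2 (fun _ => hli _) (hflow s hs))
      (fun s _ hs => by
        linarith [mul_norm_sq_le_dissipation hcoh hμ hρ1 hρ2.le hβ hφ' hφ''' hnormal (hli _) hs])
      ht
  exact (pow_le_pow_iff_left₀ (norm_nonneg _) hε.le two_ne_zero).1 hN

set_option synthInstance.maxHeartbeats 1000000 in
set_option maxHeartbeats 4000000 in
/-- the Riemannian gradient flow of G reaches ε-stationarity for all
times t ≥ G(θ(0))/(μβ²) + log(max(μβ²/ε², 1))/(ρ1ρ2μ). -/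
theorem stmt_15
    (n m d : ℕ) (hn : 1 ≤ n) (hm : 1 ≤ m) (hd : 1 ≤ d)
    (x : Fin n → EuclideanSpace ℝ (Fin d)) (hx : ∀ i, ‖x i‖ = 1)
    (μ : ℝ) (hμ : 0 < μ)
    (hcoh : ∀ c : Fin n → ℝ, μ * ∑ i, (c i) ^ 2 ≤ ‖∑ i, c i • x i‖ ^ 2)
    (y : Fin n → ℝ)
    (φ : ℝ → ℝ) (hφ : ContDiff ℝ (⊤ : ℕ∞) φ)
    (ρ1 ρ2 : ℝ) (hρ1 : 0 < ρ1) (hρ2 : 0 < ρ2)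
    (hφ' : ∀ z, ρ1 ≤ deriv φ z)
    (hφ''' : ∀ z, ρ2 ≤ deriv (deriv (deriv φ)) z)
    (β : ℝ) (hβ : 0 < β)
    (hnormal : ∀ z, β * |deriv (deriv φ) z| ≤ (deriv φ z) ^ 2 * deriv (deriv (deriv φ)) z)
    (θt : ℝ → Param m d)
    (hmem : ∀ t, 0 ≤ t → ∀ i, netF φ x i (θt t) = y i)
    (hflow : ∀ t, 0 ≤ t → HasDerivAt θt (-(rgradG φ x (θt t))) t) :
    ∀ ε : ℝ, 0 < ε → ∀ t : ℝ,
      regG φ x (θt 0) / (μ * β ^ 2)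
          + Real.log (max (μ * β ^ 2 / ε ^ 2) 1) / (ρ1 * ρ2 * μ) ≤ t →
      ‖rgradG φ x (θt t)‖ ≤ ε :=
  stmt_15_general n m d hn hm x μ hμ hcoh φ hφ ρ1 ρ2 hρ1 hρ2 hφ' hφ''' β hβ hnormal θt hflow
end
end
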